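/- arXiv:1312.2164 — 3 statements merged into one kernel-verified Lean document; each statement's English description precedes it below -/
import Mathlib

section
/- Let f be a normalized monotone submodular function on finite ground set Z, let F be the common independent sets of P matroids on Z, let G = {g₁, ..., g_m} ∈ F (listed in order with prefixes G^t = {g₁, ..., g_t}), and let O ∈ F. For 1 ≤ t ≤ m define C_t = {z ∈ O \ G : {z} ∪ G^{t−1} ∈ F and {z} ∪ G^t ∉ F}. Then ∑_{i=1}^{t} |C_i| ≤ P·t for every t = 1, ..., m. -/
open Finset
open scoped Classical

/-- A matroid on a finite ground set `Z`, given by a predicate `I` describing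
the independent sets. -/
structure IsMatroid {α : Type*} [DecidableEq α] (Z : Finset α) (I : Finset α → Prop) : Prop where
  empty_mem : I ∅
  subset_ground : ∀ ⦃S⦄, I S → S ⊆ Z
  heredity : ∀ ⦃X Y : Finset α⦄, I Y → X ⊆ Y → I X
  exchange : ∀ ⦃X Y : Finset α⦄, I X → I Y → X.card < Y.card →
    ∃ z ∈ Y \ X, I (insert z X)

/-- The prefix `G^t = {g₁, …, g_t}` of the greedy solution listed in order. -/
noncomputable def greedyPrefix {α : Type*} [DecidableEq α] {m : ℕ}
    (g : Fin m → α) (t : ℕ) : Finset α :=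
  (Finset.univ.filter (fun i : Fin m => (i : ℕ) < t)).image g

/-- `C_t`: the elements of `O \ G` that are still feasible before selecting the `t`-th
element `g_t` (i.e. can be added to `G^{t-1}` within `F`), but infeasible after
selecting `g_t` (cannot be added to `G^t` within `F`).  Here `t` is 1-indexed. -/
noncomputable def blockedAt {α : Type*} [DecidableEq α] {m : ℕ}
    (F : Finset α → Prop) (g : Fin m → α) (O G : Finset α) (t : ℕ) : Finset α :=
  (O \ G).filter (fun z =>
    F (insert z (greedyPrefix g (t - 1))) ∧ ¬ F (insert z (greedyPrefix g t)))

/-!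
The sets `C_1, …, C_t` are pairwise disjoint, since an element blocked at step `i` stays
blocked afterwards, and every element of their union is blocked at `G^t`: adding it to `G^t`
violates independence in at least one of the `P` matroids. The elements blocked by a
single matroid form an independent set (a subset of `O`) none of whose elements extends
`G^t`, so by the exchange axiom there are at most `|G^t| ≤ t` of them.
-/

section

variable {α : Type*} [DecidableEq α]

namespace IsMatroid

theorem card_le_of_forall_not_insert {Z : Finset α} {I : Finset α → Prop}
    (hM : IsMatroid Z I) {X Y : Finset α} (hX : I X) (hY : I Y)
    (h : ∀ z ∈ Y \ X, ¬ I (insert z X)) : Y.card ≤ X.card := by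
  by_contra! hlt
  obtain ⟨z, hz, hzI⟩ := hM.exchange hX hY hlt
  exact h z hz hzI

theorem card_le_mul_card_of_forall_exists_not_insert {Z : Finset α} {P : ℕ}
    {I : Fin P → Finset α → Prop} (hM : ∀ p, IsMatroid Z (I p)) {X O U : Finset α}
    (hX : ∀ p, I p X) (hO : ∀ p, I p O) (hUO : U ⊆ O)
    (hU : ∀ z ∈ U, ∃ p, ¬ I p (insert z X)) : U.card ≤ P * X.card := by
  set D : Fin P → Finset α := fun p => U.filter fun z => ¬ I p (insert z X)
  have hUD : U ⊆ univ.biUnion D := fun z hz => by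
    obtain ⟨p, hp⟩ := hU z hz
    exact mem_biUnion.2 ⟨p, mem_univ p, mem_filter.2 ⟨hz, hp⟩⟩
  have hD : ∀ p, (D p).card ≤ X.card := fun p =>
    (hM p).card_le_of_forall_not_insert (hX p)
      ((hM p).heredity (hO p) ((filter_subset _ _).trans hUO))
      (fun z hz => (mem_filter.1 (mem_sdiff.1 hz).1).2)
  calc U.card ≤ (univ.biUnion D).card := card_le_card hUD
    _ ≤ ∑ p, (D p).card := card_biUnion_le
    _ ≤ ∑ _p : Fin P, X.card := sum_le_sum fun p _ => hD p
    _ = P * X.card := by simp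

end IsMatroid

section greedyPrefix

variable {m : ℕ} (g : Fin m → α)

theorem card_greedyPrefix_le (t : ℕ) : (greedyPrefix g t).card ≤ t :=
  calc (greedyPrefix g t).card ≤ (univ.filter fun i : Fin m => (i : ℕ) < t).card :=
        card_image_le
    _ ≤ (range t).card :=
        card_le_card_of_injOn (fun i => (i : ℕ)) (fun i hi => by simpa using hi)
          (fun i _ j _ h => Fin.ext h)
    _ = t := card_range t

theorem greedyPrefix_mono : Monotone (greedyPrefix g) := fun _ _ hab =>
  image_subset_image (monotone_filter_right _ fun _ _ hi => lt_of_lt_of_le hi hab)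

variable {F : Finset α → Prop} (O G : Finset α)

theorem not_insert_of_mem_blockedAt (hF : ∀ ⦃X Y : Finset α⦄, F Y → X ⊆ Y → F X)
    {i t : ℕ} (hit : i ≤ t) {z : α} (hz : z ∈ blockedAt F g O G i) : ¬ F (insert z (greedyPrefix g t)) := fun hFt =>
  (mem_filter.1 hz).2.2 (hF hFt (insert_subset_insert _ (greedyPrefix_mono g hit)))

open Function in
theorem pairwise_disjoint_blockedAt (hF : ∀ ⦃X Y : Finset α⦄, F Y → X ⊆ Y → F X) :
    Pairwise (Disjoint on blockedAt F g O G) := by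
  refine (pairwise_disjoint_on _).2 fun i j hij => disjoint_left.2 fun z hzi hzj => ?_
  exact not_insert_of_mem_blockedAt g O G hF (Nat.le_sub_one_of_lt hij) hzi
    (mem_filter.1 hzj).2.1

end greedyPrefix

end

theorem stmt_8_general {α : Type*} [DecidableEq α] (Z : Finset α) (P m : ℕ)
    (I : Fin P → (Finset α → Prop)) (hM : ∀ p, IsMatroid Z (I p))
    (F : Finset α → Prop) (hF : ∀ S, F S ↔ ∀ p, I p S)
    (g : Fin m → α)
    (hGF : F (greedyPrefix g m))
    (O : Finset α) (hO : F O) :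
    ∀ t : ℕ, 1 ≤ t → t ≤ m →
      ∑ i ∈ Finset.Icc 1 t, (blockedAt F g O (greedyPrefix g m) i).card ≤ P * t := by
  intro t _ htm
  have hFher : ∀ ⦃X Y : Finset α⦄, F Y → X ⊆ Y → F X := fun X Y hY hXY =>
    (hF X).2 fun p => (hM p).heredity ((hF Y).1 hY p) hXY
  set C := blockedAt F g O (greedyPrefix g m)
  rw [← card_biUnion ((pairwise_disjoint_blockedAt g O _ hFher).set_pairwise _)]
  have hGt : ∀ p, I p (greedyPrefix g t) := (hF _).1 (hFher hGF (greedyPrefix_mono g htm))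
  have hblocked : ∀ z ∈ (Icc 1 t).biUnion C, ∃ p, ¬ I p (insert z (greedyPrefix g t)) := by
    intro z hz
    obtain ⟨i, hi, hzi⟩ := mem_biUnion.1 hz
    simpa [hF] using not_insert_of_mem_blockedAt g O _ hFher (mem_Icc.1 hi).2 hzi
  have hCO : (Icc 1 t).biUnion C ⊆ O := biUnion_subset.2 fun i _ =>
    (filter_subset _ _).trans sdiff_subset
  calc ((Icc 1 t).biUnion C).card ≤ P * (greedyPrefix g t).card :=
        IsMatroid.card_le_mul_card_of_forall_exists_not_insert hM hGt ((hF O).1 hO) hCO hblocked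
    _ ≤ P * t := Nat.mul_le_mul_left P (card_greedyPrefix_le g t)

theorem stmt_8 {α : Type*} [DecidableEq α] (Z : Finset α) (P m : ℕ)
    (I : Fin P → (Finset α → Prop)) (hM : ∀ p, IsMatroid Z (I p))
    (F : Finset α → Prop) (hF : ∀ S, F S ↔ ∀ p, I p S)
    (f : Finset α → ℝ)
    (g : Fin m → α) (hginj : Function.Injective g)
    (hGF : F (greedyPrefix g m))
    (O : Finset α) (hO : F O) :
    ∀ t : ℕ, 1 ≤ t → t ≤ m →
      ∑ i ∈ Finset.Icc 1 t, (blockedAt F g O (greedyPrefix g m) i).card ≤ P * t :=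
  stmt_8_general Z P m I hM F hF g hGF O hO
end

section
/- Let f : 2^Z → ℝ be normalized monotone submodular on a finite set Z with an intersection F of P matroids, and let G ∈ F be such that: (i) elements of the optimal set O ∈ F blocked at step t (the set C_t) each have marginal gain f(j | G^{t−1}) ≤ (1+δ)τ_t, where τ_t is a nonincreasing sequence with f(g_t | G^{t−1}) ≥ τ_t; and (ii) ∑_{i=1}^{t}|C_i| ≤ P·t for all t; and (iii) O \ G = ⋃_t C_t. Then ∑_{j ∈ O\G} f(j | G) ≤ (1+δ)·P·f(G), and consequently f(O) ≤ (1 + (1+δ)P)·f(G). -/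
/-!
Submodularity lowers the gain of a blocked element `j ∈ C_t` against the whole of `G` to at most
`(1+δ)τ_t`, so the sum is at most `(1+δ) ∑_t |C_t| τ_t`. As `τ` is nonincreasing and the prefix
sizes of the `C_t` are at most `P t`, Abel summation bounds this by `(1+δ) P ∑_t τ_t`, and
`∑_t τ_t ≤ f(G)` because the greedy gains telescope. Finally
`f(O) ≤ f(G ∪ O) ≤ f(G) + ∑_{j ∈ O \ G} f(j | G)`.
-/

open Finset

/-- `f` is submodular on ground set `Z` (diminishing marginal gains). -/
def IsSubmodularOn {α : Type*} [DecidableEq α] (Z : Finset α) (f : Finset α → ℝ) : Prop :=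
  ∀ S T : Finset α, S ⊆ T → T ⊆ Z → ∀ z ∈ Z, z ∉ T →
    f (insert z T) - f T ≤ f (insert z S) - f S

/-- `f` is monotone on subsets of `Z`. -/
def IsMonotoneOn {α : Type*} [DecidableEq α] (Z : Finset α) (f : Finset α → ℝ) : Prop :=
  ∀ S T : Finset α, S ⊆ T → T ⊆ Z → f S ≤ f T

lemma Fin.filter_val_lt_succ {m : ℕ} (i : Fin m) :
    univ.filter (fun j : Fin m => (j : ℕ) < i + 1) =
      insert i (univ.filter (fun j : Fin m => (j : ℕ) < i)) := by
  ext j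
  simp only [mem_filter, mem_insert, mem_univ, true_and, Fin.ext_iff]
  omega

/-- Abel summation: with `A_t = a_1 + ⋯ + a_t`, the difference `∑ a τ - c ∑ τ` equals
`∑_{t<m} (A_t - c t)(τ_t - τ_{t+1}) + (A_m - c m) τ_m`, a sum of nonpositive terms. -/
theorem Fin.sum_mul_le_mul_sum_of_prefix_sum_le {m : ℕ} (a τ : Fin m → ℝ) (c : ℝ)
    (hτ : Antitone τ) (hτ0 : ∀ i, 0 ≤ τ i)
    (ha : ∀ t ≤ m, ∑ i ∈ univ.filter (fun i : Fin m => (i : ℕ) < t), a i ≤ c * t) :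
    ∑ i, a i * τ i ≤ c * ∑ i, τ i := by
  set pre := fun t : ℕ => univ.filter (fun i : Fin m => (i : ℕ) < t) with hpre
  have key : ∀ i : Fin m, ∑ j ∈ pre (i + 1), a j * τ j ≤
      c * ∑ j ∈ pre (i + 1), τ j + (∑ j ∈ pre (i + 1), a j - c * (i + 1)) * τ i := by
    have hsucc : ∀ i : Fin m, pre (i + 1) = insert i (pre i) := Fin.filter_val_lt_succ
    have hnot : ∀ i : Fin m, i ∉ pre i := by simp [hpre]
    rintro ⟨k, hk⟩
    induction k with
    | zero =>
      have hpre0 : pre 0 = ∅ := by simp [hpre]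
      rw [hsucc, sum_insert (hnot _), sum_insert (hnot _), sum_insert (hnot _)]
      simp only [hpre0, sum_empty]
      push_cast
      linarith
    | succ k ih =>
      have ih := ih (by omega)
      have hτk := hτ (show (⟨k, by omega⟩ : Fin m) ≤ ⟨k + 1, hk⟩ from Fin.mk_le_mk.mpr k.le_succ)
      have hak := ha (k + 1) hk.le
      rw [hsucc ⟨k + 1, hk⟩, sum_insert (hnot _), sum_insert (hnot _), sum_insert (hnot _)]
      simp only at ih hτk hak ⊢
      push_cast at ih hak ⊢
      nlinarith [mul_le_mul_of_nonpos_left hτk (sub_nonpos.mpr hak)]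
  rcases m with _ | n
  · simp
  · have hall : pre (n + 1) = univ := filter_true_of_mem fun i _ => i.is_lt
    have hlast := key (Fin.last n)
    have hfull : ∑ i ∈ pre (n + 1), a i ≤ c * (n + 1 : ℕ) := ha (n + 1) le_rfl
    simp only [Fin.val_last, hall] at hlast hfull
    push_cast at hfull
    linarith [mul_nonpos_of_nonpos_of_nonneg (sub_nonpos.mpr hfull) (hτ0 (Fin.last n))]

lemma greedyPrefix_zero {α : Type*} [DecidableEq α] {m : ℕ} (g : Fin m → α) :
    greedyPrefix g 0 = ∅ := by
  simp [greedyPrefix]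

lemma greedyPrefix_succ {α : Type*} [DecidableEq α] {m : ℕ} (g : Fin m → α) (i : Fin m) :
    greedyPrefix g (i + 1) = insert (g i) (greedyPrefix g i) := by
  rw [greedyPrefix, Fin.filter_val_lt_succ, image_insert, greedyPrefix]

lemma greedyPrefix_subset {α : Type*} [DecidableEq α] {m : ℕ} (g : Fin m → α) {s t : ℕ}
    (h : s ≤ t) : greedyPrefix g s ⊆ greedyPrefix g t :=
  image_subset_image <| monotone_filter_right _ fun _ _ hi => hi.trans_le h

lemma sum_marginal_greedyPrefix {α : Type*} [DecidableEq α] {m : ℕ} (f : Finset α → ℝ) (g : Fin m → α) :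
    ∑ i : Fin m, (f (insert (g i) (greedyPrefix g i)) - f (greedyPrefix g i)) =
      f (greedyPrefix g m) - f ∅ := by
  simp_rw [← greedyPrefix_succ]
  rw [Fin.sum_univ_eq_sum_range (fun k => f (greedyPrefix g (k + 1)) - f (greedyPrefix g k)),
    sum_range_sub (fun k => f (greedyPrefix g k)), greedyPrefix_zero]

lemma IsSubmodularOn.le_add_sum_marginal {α : Type*} [DecidableEq α] {Z : Finset α}
    {f : Finset α → ℝ} (hsub : IsSubmodularOn Z f) {G : Finset α} (hG : G ⊆ Z)
    {D : Finset α} (hD : D ⊆ Z) (hDG : Disjoint D G) :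
    f (G ∪ D) ≤ f G + ∑ j ∈ D, (f (insert j G) - f G) := by
  induction D using Finset.induction_on with
  | empty => simp
  | @insert x D hxD ih =>
    rw [insert_subset_iff] at hD
    rw [disjoint_insert_left] at hDG
    have hstep := hsub G (G ∪ D) subset_union_left (union_subset hG hD.2) x hD.1
      (by simp [hDG.1, hxD])
    rw [union_insert, sum_insert hxD]
    linarith [ih hD.2 hDG.2]

theorem stmt_9_general {α : Type*} [DecidableEq α] (Z : Finset α) (P m : ℕ) (δ : ℝ)
    (hδ : 0 ≤ δ)
    (f : Finset α → ℝ) (hnorm : f ∅ = 0)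
    (hmono : IsMonotoneOn Z f) (hsub : IsSubmodularOn Z f)
    (g : Fin m → α)
    (G : Finset α) (hGdef : G = greedyPrefix g m) (hG : G ⊆ Z)
    (O : Finset α) (hO : O ⊆ Z)
    (τ : Fin m → ℝ) (hτ0 : ∀ i, 0 ≤ τ i)
    (hτmono : ∀ i j : Fin m, i ≤ j → τ j ≤ τ i)
    -- `g_t` (the element `g i` with `t = i+1`) has marginal gain at least `τ_t`
    (hgain : ∀ i : Fin m,
      f (insert (g i) (greedyPrefix g i)) - f (greedyPrefix g i) ≥ τ i)
    -- the blocked sets `C_t` (here `C i` is `C_{i+1}`)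
    (C : Fin m → Finset α)
    (hCdisj : ∀ i j : Fin m, i ≠ j → Disjoint (C i) (C j))
    -- (iii) `O \ G = ⋃_t C_t`
    (hCunion : Finset.univ.biUnion C = O \ G)
    -- (i) each blocked element's marginal gain w.r.t. `G^{t-1}` is at most `(1+δ)τ_t`
    (hCgain : ∀ i : Fin m, ∀ j ∈ C i,
      f (insert j (greedyPrefix g i)) - f (greedyPrefix g i) ≤ (1 + δ) * τ i)
    -- (ii) prefix-size bound `∑_{i=1}^t |C_i| ≤ P·t`
    (hCsize : ∀ t : ℕ, t ≤ m →
      ∑ i ∈ Finset.univ.filter (fun i : Fin m => (i : ℕ) < t), (C i).card ≤ P * t) :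
    (∑ j ∈ O \ G, (f (insert j G) - f G) ≤ (1 + δ) * P * f G) ∧
    f O ≤ (1 + (1 + δ) * P) * f G := by
  have hτ_le : ∑ i, τ i ≤ f G := by
    refine (sum_le_sum fun i _ => hgain i).trans_eq ?_
    rw [sum_marginal_greedyPrefix, hnorm, sub_zero, hGdef]
  have hgainG : ∀ i, ∀ j ∈ C i, f (insert j G) - f G ≤ (1 + δ) * τ i := by
    intro i j hj
    have hjOG : j ∈ O \ G := hCunion ▸ mem_biUnion.2 ⟨i, mem_univ i, hj⟩
    rw [mem_sdiff] at hjOG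
    exact (hsub _ G (hGdef ▸ greedyPrefix_subset g i.is_lt.le) hG j (hO hjOG.1) hjOG.2).trans
      (hCgain i j hj)
  have habel := Fin.sum_mul_le_mul_sum_of_prefix_sum_le (fun i => ((C i).card : ℝ)) τ P
    hτmono hτ0 fun t ht => by exact_mod_cast hCsize t ht
  have hsum : ∑ j ∈ O \ G, (f (insert j G) - f G) ≤ (1 + δ) * P * f G :=
    calc ∑ j ∈ O \ G, (f (insert j G) - f G)
        = ∑ i, ∑ j ∈ C i, (f (insert j G) - f G) := by
          rw [← hCunion, sum_biUnion fun i _ j _ hij => hCdisj i j hij]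
      _ ≤ ∑ i, (C i).card • ((1 + δ) * τ i) :=
          sum_le_sum fun i _ => sum_le_card_nsmul _ _ _ (hgainG i)
      _ = (1 + δ) * ∑ i, ((C i).card : ℝ) * τ i := by
          simp only [nsmul_eq_mul, mul_sum]
          exact sum_congr rfl fun i _ => by ring
      _ ≤ (1 + δ) * P * f G := by
          rw [mul_assoc]
          exact mul_le_mul_of_nonneg_left (habel.trans (by gcongr)) (by linarith)
  refine ⟨hsum, ?_⟩
  have hunion := hsub.le_add_sum_marginal hG (sdiff_subset.trans hO) sdiff_disjoint
  rw [union_sdiff_self_eq_union] at hunion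
  have hOGO := hmono O (G ∪ O) subset_union_right (union_subset hG hO)
  linarith

theorem stmt_9 {α : Type*} [DecidableEq α] (Z : Finset α) (P m : ℕ) (δ : ℝ)
    (hδ : 0 ≤ δ)
    (f : Finset α → ℝ) (hnorm : f ∅ = 0)
    (hmono : IsMonotoneOn Z f) (hsub : IsSubmodularOn Z f)
    (g : Fin m → α) (hginj : Function.Injective g)
    (G : Finset α) (hGdef : G = greedyPrefix g m) (hG : G ⊆ Z)
    (O : Finset α) (hO : O ⊆ Z)
    (τ : Fin m → ℝ) (hτ0 : ∀ i, 0 ≤ τ i)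
    (hτmono : ∀ i j : Fin m, i ≤ j → τ j ≤ τ i)
    -- `g_t` (the element `g i` with `t = i+1`) has marginal gain at least `τ_t`
    (hgain : ∀ i : Fin m,
      f (insert (g i) (greedyPrefix g i)) - f (greedyPrefix g i) ≥ τ i)
    -- the blocked sets `C_t` (here `C i` is `C_{i+1}`)
    (C : Fin m → Finset α)
    (hCdisj : ∀ i j : Fin m, i ≠ j → Disjoint (C i) (C j))
    -- (iii) `O \ G = ⋃_t C_t`
    (hCunion : Finset.univ.biUnion C = O \ G)
    -- (i) each blocked element's marginal gain w.r.t. `G^{t-1}` is at most `(1+δ)τ_t`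
    (hCgain : ∀ i : Fin m, ∀ j ∈ C i,
      f (insert j (greedyPrefix g i)) - f (greedyPrefix g i) ≤ (1 + δ) * τ i)
    -- (ii) prefix-size bound `∑_{i=1}^t |C_i| ≤ P·t`
    (hCsize : ∀ t : ℕ, t ≤ m →
      ∑ i ∈ Finset.univ.filter (fun i : Fin m => (i : ℕ) < t), (C i).card ≤ P * t) :
    (∑ j ∈ O \ G, (f (insert j G) - f G) ≤ (1 + δ) * P * f G) ∧
    f O ≤ (1 + (1 + δ) * P) * f G :=
  stmt_9_general Z P m δ hδ f hnorm hmono hsub g G hGdef hG O hO τ hτ0 hτmono hgain C hCdisj hCunion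
    hCgain hCsize
end

section
/- In the intersection F of P matroids on finite ground set Z, if G is a maximal element of F contained in G ∪ O and O ∈ F, then |O \ G| ≤ P·|G|. -/
/-!
By maximality of `G`, every `z ∈ O \ G` is blocked by some matroid `p`, i.e. `insert z G` is
dependent in `p`. The elements of `O` blocked by a fixed `p` form a set independent in `p` none
of whose elements extends `G`, so by the exchange axiom there are at most `|G|` of them.
-/

open Finset

namespace IsMatroid

variable {α : Type*} [DecidableEq α] {Z : Finset α} {I : Finset α → Prop}

theorem card_le_of_forall_not_indep_insert (hM : IsMatroid Z I) {X Y : Finset α} (hX : I X)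
    (hY : I Y) (h : ∀ z ∈ Y \ X, ¬ I (insert z X)) : Y.card ≤ X.card := by
  by_contra! hlt
  obtain ⟨z, hz, hins⟩ := hM.exchange hX hY hlt
  exact h z hz hins

theorem card_filter_not_indep_insert_le (hM : IsMatroid Z I) {X Y : Finset α}
    [DecidablePred fun z => ¬ I (insert z X)] (hX : I X) (hY : I Y) : (Y.filter fun z => ¬ I (insert z X)).card ≤ X.card :=
  hM.card_le_of_forall_not_indep_insert hX (hM.heredity hY (filter_subset _ _))
    fun _ hz => (mem_filter.1 (mem_sdiff.1 hz).1).2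

end IsMatroid

theorem stmt_17 {α : Type*} [DecidableEq α] (Z : Finset α) (P : ℕ)
    (I : Fin P → (Finset α → Prop)) (hM : ∀ p, IsMatroid Z (I p))
    (F : Finset α → Prop) (hF : ∀ S, F S ↔ ∀ p, I p S)
    (G O : Finset α) (hG : F G) (hO : F O)
    -- `G` is maximal in `F` within `Q = G ∪ O`
    (hmax : ∀ z ∈ (G ∪ O) \ G, ¬ F (insert z G)) :
    (O \ G).card ≤ P * G.card := by
  classical
  set blocked : Fin P → Finset α := fun p => O.filter fun z => ¬ I p (insert z G)
  have hcover : O \ G ⊆ univ.biUnion blocked := by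
    intro z hz
    have hzQ : z ∈ (G ∪ O) \ G := sdiff_subset_sdiff subset_union_right le_rfl hz
    obtain ⟨p, hp⟩ := not_forall.1 (mt (hF _).2 (hmax z hzQ))
    exact mem_biUnion.2 ⟨p, mem_univ p, mem_filter.2 ⟨(mem_sdiff.1 hz).1, hp⟩⟩
  have hblocked : ∀ p ∈ univ, (blocked p).card ≤ G.card := fun p _ =>
    (hM p).card_filter_not_indep_insert_le ((hF G).1 hG p) ((hF O).1 hO p)
  calc (O \ G).card ≤ (univ.biUnion blocked).card := card_le_card hcover
    _ ≤ P * G.card := by simpa using card_biUnion_le_card_mul univ blocked _ hblocked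
end
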